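/- Let U be a supertropical semiring with ghost ideal M, Φ an equivalence relation on the set M, 𝔄 ⊆ U a subset with M ⊆ 𝔄, and E := E(U,𝔄,Φ). Then: (i) E is multiplicative if and only if Φ is multiplicative (for a, b, c ∈ M, Φ(a,b) implies Φ(c*a, c*b)) and 𝔄 is an ideal of U (contains 0, is closed under addition, and U*𝔄 ⊆ 𝔄); (ii) E is additive if and only if Φ is order compatible with respect to the ghost order and 𝔄 contains every x ∈ U with e*x ∉ L(Φ); (iii) E is both additive and multiplicative if and only if Φ is multiplicative and order compatible and 𝔄 is an ideal of U containing every x ∈ U with e*x ∉ L(Φ). -/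

import Mathlib

/-- The relation `E(U,𝔄,Φ)`: `x ~ y` iff `x = y`, or `x, y ∈ 𝔄` and
`Φ(e*x, e*y)`. -/
def EUAPhi {U : Type*} [CommSemiring U] (A : Set U) (Φ : U → U → Prop)
    (x y : U) : Prop :=
  x = y ∨ (x ∈ A ∧ y ∈ A ∧ Φ ((1 + 1) * x) ((1 + 1) * y))

/-- `L(Φ)`: the nonzero ghost elements which are the smallest element of their
`Φ`-class (with respect to the ghost order `a ≤ b ↔ a + b = b`). -/
def LPhi {U : Type*} [CommSemiring U] (Φ : U → U → Prop) : Set U :=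
  {a : U | (1 + 1) * a = a ∧ a ≠ 0 ∧ ∀ b : U, Φ a b → a + b = b}

/-- An ideal of a commutative semiring, as a set. -/
def IsSemiringIdeal {R : Type*} [CommSemiring R] (I : Set R) : Prop :=
  (0 : R) ∈ I ∧ (∀ x ∈ I, ∀ y ∈ I, x + y ∈ I) ∧ (∀ r : R, ∀ x ∈ I, r * x ∈ I)

/-!
Write `e = 1 + 1`, `a = e x`, `b = e y`, `c = e z`. In a supertropical semiring `x + z` is `x`,
`z` or `e x` according as `c < a`, `a < c` or `a = c`, and `e (x + z) = a + c` is the maximum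
of `a` and `c` in the total ghost order. So additivity of `E(U,𝔄,Φ)` asks that `Φ` be stable
under `a ↦ max(a, c)`, which is order compatibility, and that `x + z = z` lie in `𝔄` whenever
`x ~ y` with `a < c ≤ b`; then `c` is `Φ`-equivalent to the strictly smaller `a`, so `c ∉ L(Φ)`.
Multiplicativity is simpler since `e (x r) = (e r) (e x)`, and multiplying `x ~ e x` by `r`
puts `x r` into `𝔄`.
-/

structure IsSupertropical (U : Type*) [CommSemiring U] : Prop where
  ghost_mul_ghost : (1 + 1 : U) * (1 + 1) = 1 + 1
  add_of_ghost_eq : ∀ x y : U, (1 + 1) * x = (1 + 1) * y → x + y = (1 + 1) * x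
  add_of_ghost_ne : ∀ x y : U, (1 + 1) * x ≠ (1 + 1) * y → x + y = x ∨ x + y = y

structure IsGhostEquivalence {U : Type*} [CommSemiring U] (Φ : U → U → Prop) : Prop where
  ghost : ∀ a b : U, Φ a b → (1 + 1) * a = a ∧ (1 + 1) * b = b
  refl : ∀ a : U, (1 + 1) * a = a → Φ a a
  symm : ∀ a b : U, Φ a b → Φ b a
  trans : ∀ a b c : U, Φ a b → Φ b c → Φ a c

def IsMulCompatible {U : Type*} [Mul U] (r : U → U → Prop) : Prop :=
  ∀ x y z : U, r x y → r (x * z) (y * z)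

def IsAddCompatible {U : Type*} [Add U] (r : U → U → Prop) : Prop :=
  ∀ x y z : U, r x y → r (x + z) (y + z)

def IsGhostMultiplicative {U : Type*} [CommSemiring U] (Φ : U → U → Prop) : Prop :=
  ∀ a b c : U, (1 + 1) * c = c → Φ a b → Φ (c * a) (c * b)

def IsOrderCompatible {U : Type*} [CommSemiring U] (Φ : U → U → Prop) : Prop :=
  ∀ a1 a2 a3 a4 : U, (1 + 1) * a1 = a1 → (1 + 1) * a2 = a2 →
    (1 + 1) * a3 = a3 → (1 + 1) * a4 = a4 → a1 + a2 = a2 →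
    a3 + a4 = a4 → Φ a1 a4 → Φ a2 a3 → Φ a1 a2

namespace IsSupertropical

variable {U : Type*} [CommSemiring U]

theorem ghost_ghost (hU : IsSupertropical U) (x : U) :
    (1 + 1) * ((1 + 1) * x) = (1 + 1) * x := by
  rw [← mul_assoc, hU.ghost_mul_ghost]

theorem eq_zero_of_ghost_eq_zero (hU : IsSupertropical U) {x : U} (hx : (1 + 1) * x = 0) :
    x = 0 := by
  simpa [hx] using hU.add_of_ghost_eq x 0 (by rw [hx, mul_zero])

theorem ghost_add_ghost (hU : IsSupertropical U) (x : U) :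
    (1 + 1) * x + (1 + 1) * x = (1 + 1) * x := by
  simpa only [add_mul, one_mul] using hU.ghost_ghost x

theorem ghost_add_self (hU : IsSupertropical U) (x : U) : (1 + 1) * x + x = (1 + 1) * x := by
  simpa [hU.ghost_ghost] using hU.add_of_ghost_eq ((1 + 1) * x) x (hU.ghost_ghost x)

theorem ghost_total (hU : IsSupertropical U) {a : U} (ha : (1 + 1) * a = a) (b : U) :
    a + b = a ∨ a + b = b := by
  by_cases h : (1 + 1) * a = (1 + 1) * b
  · exact .inl (by rw [hU.add_of_ghost_eq a b h, ha])
  · exact hU.add_of_ghost_ne a b h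

theorem add_eq_right_of_ghost_lt (hU : IsSupertropical U) {x y : U}
    (hne : (1 + 1) * x ≠ (1 + 1) * y) (hle : (1 + 1) * x + (1 + 1) * y = (1 + 1) * y) :
    x + y = y := by
  refine (hU.add_of_ghost_ne x y hne).resolve_left fun h => hne ?_
  rw [← hle, ← mul_add, h]

theorem add_eq_right_or_ghost_le (hU : IsSupertropical U) (x z : U) :
    x + z = z ∨ (1 + 1) * z + (1 + 1) * x = (1 + 1) * x := by
  by_cases h : (1 + 1) * x = (1 + 1) * z
  · right
    rw [← h, hU.ghost_add_ghost]
  · rcases hU.add_of_ghost_ne x z h with h | h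
    · right
      rw [add_comm, ← mul_add, h]
    · exact .inl h

theorem add_mem_of_ghosts_subset (hU : IsSupertropical U) {A : Set U}
    (hMA : ∀ x : U, (1 + 1) * x = x → x ∈ A) {x y : U} (hx : x ∈ A) (hy : y ∈ A) :
    x + y ∈ A := by
  by_cases h : (1 + 1) * x = (1 + 1) * y
  · exact hU.add_of_ghost_eq x y h ▸ hMA _ (hU.ghost_ghost x)
  · rcases hU.add_of_ghost_ne x y h with h | h <;> rwa [h]

end IsSupertropical

section

variable {U : Type*} [CommSemiring U] {Φ : U → U → Prop} {A : Set U}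

theorem EUAPhi_iff_of_ghost (hΦ : IsGhostEquivalence Φ)
    (hMA : ∀ x : U, (1 + 1) * x = x → x ∈ A) {a b : U} (ha : (1 + 1) * a = a)
    (hb : (1 + 1) * b = b) : EUAPhi A Φ a b ↔ Φ a b := by
  refine ⟨?_, fun h => .inr ⟨hMA a ha, hMA b hb, by rwa [ha, hb]⟩⟩
  rintro (rfl | ⟨-, -, h⟩)
  · exact hΦ.refl a ha
  · rwa [ha, hb] at h

theorem IsMulCompatible.isGhostMultiplicative (hΦ : IsGhostEquivalence Φ)
    (hMA : ∀ x : U, (1 + 1) * x = x → x ∈ A) (hE : IsMulCompatible (EUAPhi A Φ)) :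
    IsGhostMultiplicative Φ := by
  intro a b c hc hab
  obtain ⟨ha, hb⟩ := hΦ.ghost a b hab
  have hca : (1 + 1) * (c * a) = c * a := by rw [← mul_assoc, hc]
  have hcb : (1 + 1) * (c * b) = c * b := by rw [← mul_assoc, hc]
  have h := hE a b c ((EUAPhi_iff_of_ghost hΦ hMA ha hb).2 hab)
  rwa [mul_comm a, mul_comm b, EUAPhi_iff_of_ghost hΦ hMA hca hcb] at h

theorem IsMulCompatible.isSemiringIdeal (hU : IsSupertropical U) (hΦ : IsGhostEquivalence Φ)
    (hMA : ∀ x : U, (1 + 1) * x = x → x ∈ A) (hE : IsMulCompatible (EUAPhi A Φ)) :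
    IsSemiringIdeal A := by
  refine ⟨hMA 0 (mul_zero _), fun x hx y hy => hU.add_mem_of_ghosts_subset hMA hx hy, ?_⟩
  intro r x hx
  have hxe : EUAPhi A Φ x ((1 + 1) * x) :=
    .inr ⟨hx, hMA _ (hU.ghost_ghost x), by
      rw [hU.ghost_ghost]; exact hΦ.refl _ (hU.ghost_ghost x)⟩
  rw [mul_comm]
  rcases hE x _ r hxe with h | ⟨h, -, -⟩
  · exact h ▸ hMA _ (by rw [← mul_assoc, hU.ghost_ghost])
  · exact h

theorem isMulCompatible_EUAPhi (hU : IsSupertropical U) (hΦm : IsGhostMultiplicative Φ)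
    (hA : IsSemiringIdeal A) : IsMulCompatible (EUAPhi A Φ) := by
  rintro x y z (rfl | ⟨hx, hy, hxy⟩)
  · exact .inl rfl
  have ghost_mul (w : U) : (1 + 1) * (w * z) = ((1 + 1) * z) * ((1 + 1) * w) := by
    rw [mul_mul_mul_comm, hU.ghost_mul_ghost, mul_comm z w]
  refine .inr ⟨mul_comm z x ▸ hA.2.2 z x hx, mul_comm z y ▸ hA.2.2 z y hy, ?_⟩
  rw [ghost_mul, ghost_mul]
  exact hΦm _ _ _ (hU.ghost_ghost z) hxy

theorem isMulCompatible_EUAPhi_iff (hU : IsSupertropical U) (hΦ : IsGhostEquivalence Φ)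
    (hMA : ∀ x : U, (1 + 1) * x = x → x ∈ A) :
    IsMulCompatible (EUAPhi A Φ) ↔ IsGhostMultiplicative Φ ∧ IsSemiringIdeal A :=
  ⟨fun hE => ⟨hE.isGhostMultiplicative hΦ hMA, hE.isSemiringIdeal hU hΦ hMA⟩,
    fun ⟨hΦm, hA⟩ => isMulCompatible_EUAPhi hU hΦm hA⟩

end

section

variable {U : Type*} [CommSemiring U] {Φ : U → U → Prop} {A : Set U}

theorem IsOrderCompatible.ghost_add_right (hU : IsSupertropical U) (hΦ : IsGhostEquivalence Φ)
    (hOC : IsOrderCompatible Φ) {a b c : U} (hc : (1 + 1) * c = c) (hab : Φ a b) :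
    Φ (a + c) (b + c) := by
  obtain ⟨ha, hb⟩ := hΦ.ghost a b hab
  rcases hU.ghost_total ha c with hac | hac <;> rcases hU.ghost_total hb c with hbc | hbc <;>
    rw [hac, hbc]
  · exact hab
  · exact hΦ.symm _ _ <|
      hOC c a b c hc ha hb hc (by rwa [add_comm]) hbc (hΦ.refl c hc) hab
  · exact hOC c b a c hc hb ha hc (by rwa [add_comm]) hac (hΦ.refl c hc) (hΦ.symm _ _ hab)
  · exact hΦ.refl c hc

theorem IsAddCompatible.isOrderCompatible (hU : IsSupertropical U) (hΦ : IsGhostEquivalence Φ)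
    (hMA : ∀ x : U, (1 + 1) * x = x → x ∈ A) (hE : IsAddCompatible (EUAPhi A Φ)) :
    IsOrderCompatible Φ := by
  intro a1 a2 a3 a4 h1 h2 h3 h4 h12 h34 h14 h23
  have E_iff := @EUAPhi_iff_of_ghost _ _ _ _ hΦ hMA
  have h24 : Φ a2 a4 := by
    rcases hU.ghost_total h2 a4 with h | h
    · have := hE a2 a3 a4 ((E_iff h2 h3).2 h23)
      rwa [h34, h, E_iff h2 h4] at this
    · have := hE a1 a4 a2 ((E_iff h1 h4).2 h14)
      rwa [h12, add_comm a4, h, E_iff h2 h4] at this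
  exact hΦ.trans _ _ _ h14 (hΦ.symm _ _ h24)

theorem IsAddCompatible.mem_of_ghost_not_mem_LPhi (hU : IsSupertropical U)
    (hΦ : IsGhostEquivalence Φ) (hMA : ∀ x : U, (1 + 1) * x = x → x ∈ A)
    (hE : IsAddCompatible (EUAPhi A Φ)) (x : U) (hxL : (1 + 1) * x ∉ LPhi Φ) : x ∈ A := by
  by_cases hx0 : (1 + 1) * x = 0
  · exact hU.eq_zero_of_ghost_eq_zero hx0 ▸ hMA 0 (mul_zero _)
  obtain ⟨b, hxb, hne⟩ : ∃ b, Φ ((1 + 1) * x) b ∧ (1 + 1) * x + b ≠ b := by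
    by_contra! h
    exact hxL ⟨hU.ghost_ghost x, hx0, h⟩
  have hb := (hΦ.ghost _ _ hxb).2
  have hbx : b + x = x := by
    refine hU.add_eq_right_of_ghost_lt (fun h => ?_) ?_
    · rw [hb] at h
      subst h
      exact hne (hU.ghost_add_ghost x)
    · rw [hb, add_comm]
      exact (hU.ghost_total (hU.ghost_ghost x) b).resolve_right hne
  -- adding `x` to `e x ~ b` gives `e x ~ x`
  have h := hE _ _ x ((EUAPhi_iff_of_ghost hΦ hMA (hU.ghost_ghost x) hb).2 hxb)
  rw [hU.ghost_add_self, hbx] at h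
  rcases h with h | ⟨-, h, -⟩
  · exact h ▸ hMA _ (hU.ghost_ghost x)
  · exact h

theorem add_mem_of_ghost_le (hU : IsSupertropical U) (hΦ : IsGhostEquivalence Φ)
    (hOC : IsOrderCompatible Φ) (hLC : ∀ x : U, (1 + 1) * x ∉ LPhi Φ → x ∈ A)
    (hMA : ∀ x : U, (1 + 1) * x = x → x ∈ A) {x z b : U} (hx : x ∈ A)
    (hxb : Φ ((1 + 1) * x) b) (hzb : (1 + 1) * z + b = b) : x + z ∈ A := by
  by_cases h : (1 + 1) * x = (1 + 1) * z
  · exact hU.add_of_ghost_eq x z h ▸ hMA _ (hU.ghost_ghost x)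
  rcases hU.add_of_ghost_ne x z h with hxz | hxz
  · rwa [hxz]
  rw [hxz]
  -- `e z` is equivalent to the strictly smaller `e x`, so it is not in `L(Φ)`
  refine hLC z fun hL => h ?_
  obtain ⟨ha, hb⟩ := hΦ.ghost _ _ hxb
  have hle : (1 + 1) * x + (1 + 1) * z = (1 + 1) * z := by rw [← mul_add, hxz]
  have hΦxz : Φ ((1 + 1) * x) ((1 + 1) * z) :=
    hOC _ _ _ _ ha (hU.ghost_ghost z) (hU.ghost_ghost z) hb hle hzb hxb
      (hΦ.refl _ (hU.ghost_ghost z))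
  rw [← hL.2.2 _ (hΦ.symm _ _ hΦxz), add_comm, hle]

theorem isAddCompatible_EUAPhi (hU : IsSupertropical U) (hΦ : IsGhostEquivalence Φ)
    (hOC : IsOrderCompatible Φ) (hLC : ∀ x : U, (1 + 1) * x ∉ LPhi Φ → x ∈ A)
    (hMA : ∀ x : U, (1 + 1) * x = x → x ∈ A) : IsAddCompatible (EUAPhi A Φ) := by
  rintro x y z (rfl | ⟨hx, hy, hxy⟩)
  · exact .inl rfl
  obtain ⟨ha, hb⟩ := hΦ.ghost _ _ hxy
  have hΦ_add : Φ ((1 + 1) * (x + z)) ((1 + 1) * (y + z)) := by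
    rw [mul_add, mul_add]
    exact hOC.ghost_add_right hU hΦ (hU.ghost_ghost z) hxy
  have of_ghost_le (w : U) (hxw : Φ ((1 + 1) * x) w) (hyw : Φ ((1 + 1) * y) w)
      (hzw : (1 + 1) * z + w = w) : EUAPhi A Φ (x + z) (y + z) :=
    .inr ⟨add_mem_of_ghost_le hU hΦ hOC hLC hMA hx hxw hzw,
      add_mem_of_ghost_le hU hΦ hOC hLC hMA hy hyw hzw, hΦ_add⟩
  rcases hU.add_eq_right_or_ghost_le x z with hxz | hzx
  · rcases hU.add_eq_right_or_ghost_le y z with hyz | hzy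
    · exact .inl (hxz.trans hyz.symm)
    · exact of_ghost_le _ hxy (hΦ.refl _ hb) hzy
  · exact of_ghost_le _ (hΦ.refl _ ha) (hΦ.symm _ _ hxy) hzx

theorem isAddCompatible_EUAPhi_iff (hU : IsSupertropical U) (hΦ : IsGhostEquivalence Φ)
    (hMA : ∀ x : U, (1 + 1) * x = x → x ∈ A) :
    IsAddCompatible (EUAPhi A Φ) ↔
      IsOrderCompatible Φ ∧ ∀ x : U, (1 + 1) * x ∉ LPhi Φ → x ∈ A :=
  ⟨fun hE => ⟨hE.isOrderCompatible hU hΦ hMA, hE.mem_of_ghost_not_mem_LPhi hU hΦ hMA⟩,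
    fun ⟨hOC, hLC⟩ => isAddCompatible_EUAPhi hU hΦ hOC hLC hMA⟩

end

/-- criteria for `E(U,𝔄,Φ)` to be multiplicative, additive, or
homomorphic. -/
theorem EUAPhi_multiplicative_additive_iff {U : Type*} [CommSemiring U]
    (hST1 : (1 + 1 : U) * (1 + 1) = 1 + 1)
    (hST2 : ∀ x y : U, (1 + 1) * x = (1 + 1) * y → x + y = (1 + 1) * x)
    (hST3 : ∀ x y : U, (1 + 1) * x ≠ (1 + 1) * y → x + y = x ∨ x + y = y)
    (Φ : U → U → Prop)
    (hΦM : ∀ a b : U, Φ a b → (1 + 1) * a = a ∧ (1 + 1) * b = b)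
    (hΦrefl : ∀ a : U, (1 + 1) * a = a → Φ a a)
    (hΦsymm : ∀ a b : U, Φ a b → Φ b a)
    (hΦtrans : ∀ a b c : U, Φ a b → Φ b c → Φ a c)
    (A : Set U) (hMA : ∀ x : U, (1 + 1) * x = x → x ∈ A) :
    -- (i)
    ((∀ x y z : U, EUAPhi A Φ x y → EUAPhi A Φ (x * z) (y * z)) ↔
      ((∀ a b c : U, (1 + 1) * c = c → Φ a b → Φ (c * a) (c * b)) ∧
        IsSemiringIdeal A)) ∧
    -- (ii)
    ((∀ x y z : U, EUAPhi A Φ x y → EUAPhi A Φ (x + z) (y + z)) ↔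
      ((∀ a1 a2 a3 a4 : U, (1 + 1) * a1 = a1 → (1 + 1) * a2 = a2 →
          (1 + 1) * a3 = a3 → (1 + 1) * a4 = a4 → a1 + a2 = a2 →
          a3 + a4 = a4 → Φ a1 a4 → Φ a2 a3 → Φ a1 a2) ∧
        (∀ x : U, (1 + 1) * x ∉ LPhi Φ → x ∈ A))) ∧
    -- (iii)
    (((∀ x y z : U, EUAPhi A Φ x y → EUAPhi A Φ (x + z) (y + z)) ∧
        (∀ x y z : U, EUAPhi A Φ x y → EUAPhi A Φ (x * z) (y * z))) ↔
      ((∀ a b c : U, (1 + 1) * c = c → Φ a b → Φ (c * a) (c * b)) ∧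
        (∀ a1 a2 a3 a4 : U, (1 + 1) * a1 = a1 → (1 + 1) * a2 = a2 →
          (1 + 1) * a3 = a3 → (1 + 1) * a4 = a4 → a1 + a2 = a2 →
          a3 + a4 = a4 → Φ a1 a4 → Φ a2 a3 → Φ a1 a2) ∧
        IsSemiringIdeal A ∧
        (∀ x : U, (1 + 1) * x ∉ LPhi Φ → x ∈ A))) := by
  have hU : IsSupertropical U := ⟨hST1, hST2, hST3⟩
  have hΦ : IsGhostEquivalence Φ := ⟨hΦM, hΦrefl, hΦsymm, hΦtrans⟩
  have hmul := isMulCompatible_EUAPhi_iff hU hΦ hMA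
  have hadd := isAddCompatible_EUAPhi_iff hU hΦ hMA
  exact ⟨hmul, hadd, (and_congr hadd hmul).trans (by tauto)⟩
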